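/- Let n ≥ 2, ℓ ≥ 1, and let Γ : ({0,1}^ℓ)^n → ℂ be a blockwise symmetric matchgate signature of arity nℓ whose matrix form M(Γ) has rank at least 2. Then there exist α_1, α_2, …, α_n ∈ {0,1}^ℓ and positions s, t ∈ {1,…,ℓ} such that the 2×2 submatrix of M(Γ) with rows indexed by α_1 and α_1+e_s and columns indexed by (α_2,α_3,…,α_n) and (α_2+e_t,α_3,…,α_n) is nonsingular, and moreover either both of its off-diagonal entries Γ(α_1,α_2+e_t,α_3,…,α_n) and Γ(α_1+e_s,α_2,α_3,…,α_n) are zero, or both of its diagonal entries Γ(α_1,α_2,…,α_n) and Γ(α_1+e_s,α_2+e_t,α_3,…,α_n) are zero. -/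

import Mathlib

/-!
If no nonzero entry `Γ u` has a nonzero partner `Γ (u + e_p + e_q)` with `p`, `q` in different
blocks, then every `2 × 2` minor of `M(Γ)` vanishes. Indeed, the MGI at `α = x + e_p` then pairs
each flipped position of two nonzero entries with another one in the same block, so nonzero
entries differ in an even number of bits within each block. For nonzero `x` and `y = x + D`, with
`D₀` the part of `D` in the first block, the products `F w = Γ (x + w) Γ (y + w)` (`w ⊆ D`)
satisfy the MGI relations `∑ₚ ±F (w + e_p) = 0` and vanish when `|w ∩ D₀|` is odd; Walsh–Fourier
analysis on the subsets of `D` turns this into `F D₀ = F ∅`, i.e.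
`Γ(x₁, x') Γ(y₁, y') = Γ(y₁, x') Γ(x₁, y')`.

So `rank M(Γ) ≥ 2` produces such a pair `u`, `u + e_p + e_q`; block symmetry moves `p` and `q`
into the first two blocks, and by the parity condition `Γ (u + e_p) = Γ (u + e_q) = 0`, which
makes the `2 × 2` submatrix diagonal with nonzero diagonal.
-/

open Finset

namespace Matchgate

/-- Bitwise XOR of two bit strings. -/
def bxor {m : ℕ} (a b : Fin m → Bool) : Fin m → Bool := fun i => Bool.xor (a i) (b i)

/-- The bit string `e_p` with a `1` in position `p` and `0` elsewhere. -/
def unit {m : ℕ} (p : Fin m) : Fin m → Bool := fun i => decide (i = p)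

/-- Hamming weight of a bit string. -/
def wt {m : ℕ} (a : Fin m → Bool) : ℕ := (Finset.univ.filter fun i => a i = true).card

/-- Total Hamming weight of a blockwise bit string. -/
def wtB {n ℓ : ℕ} (α : Fin n → Fin ℓ → Bool) : ℕ := ∑ j, wt (α j)

/-- Blockwise XOR. -/
def bxorB {n ℓ : ℕ} (α β : Fin n → Fin ℓ → Bool) : Fin n → Fin ℓ → Bool :=
  fun j => bxor (α j) (β j)

/-- The parity bit `p(a) = wt(a) mod 2` of a bit string, as a `Bool`. -/
def pB {m : ℕ} (a : Fin m → Bool) : Bool := decide (wt a % 2 = 1)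

/-- A blockwise signature (blocks of size `ℓ`, `n` blocks) is blockwise symmetric if it is
invariant under every permutation of its blocks. -/
def BlockSym {n ℓ : ℕ} (Γ : (Fin n → Fin ℓ → Bool) → ℂ) : Prop :=
  ∀ (σ : Equiv.Perm (Fin n)) (α : Fin n → Fin ℓ → Bool), Γ (α ∘ σ) = Γ α

/-- The parity condition for a blockwise signature: either all even entries vanish or all
odd entries vanish. -/
def ParityCond {n ℓ : ℕ} (Γ : (Fin n → Fin ℓ → Bool) → ℂ) : Prop :=
  (∀ α, wtB α % 2 = 0 → Γ α = 0) ∨ (∀ α, wtB α % 2 = 1 → Γ α = 0)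

/-- The Matchgate Identities for a blockwise signature.  Positions are pairs `(j, i)`
(block `j`, bit `i` within the block) ordered lexicographically block-major, which is the
order of the flattened bit string `α₁α₂⋯αₙ`.  For every pattern `α` and every position set
`P`, the alternating sum `Σ_{p ∈ P} (-1)^{rank of p in P} Γ(α + e_p) Γ(α + P + e_p)`
vanishes. -/
def MGI {n ℓ : ℕ} (Γ : (Fin n → Fin ℓ → Bool) → ℂ) : Prop :=
  ∀ (α : Fin n → Fin ℓ → Bool) (P : Finset (Fin n × Fin ℓ)),
    ∑ p ∈ P,
      (-1 : ℂ) ^ (P.filter fun q => q.1 < p.1 ∨ (q.1 = p.1 ∧ q.2 ≤ p.2)).card *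
        Γ (fun j i => Bool.xor (α j i) (decide ((j, i) = p))) *
        Γ (fun j i => Bool.xor (α j i)
            (Bool.xor (decide ((j, i) ∈ P)) (decide ((j, i) = p)))) = 0

/-- Prepend an element to a length `n - 1` tuple, giving a length `n` tuple. -/
def cons0 {n : ℕ} {X : Type*} (a : X) (b : Fin (n - 1) → X) : Fin n → X :=
  fun j => if h : (j : ℕ) = 0 then a else b ⟨(j : ℕ) - 1, by have := j.isLt; omega⟩

/-- The matrix form `M(Γ)` of a blockwise signature: rows indexed by the first block,
columns by the remaining `n - 1` blocks. -/
def matrixForm {n ℓ : ℕ} (Γ : (Fin n → Fin ℓ → Bool) → ℂ) :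
    Matrix (Fin ℓ → Bool) (Fin (n - 1) → Fin ℓ → Bool) ℂ :=
  Matrix.of fun a b => Γ (cons0 a b)

/-- XOR block `j` of `α` with `c`, leaving the other blocks unchanged. -/
def flipBlock {n ℓ : ℕ} (α : Fin n → Fin ℓ → Bool) (j : Fin n) (c : Fin ℓ → Bool) :
    Fin n → Fin ℓ → Bool := Function.update α j (bxor (α j) c)

/-- Insert block `c` at position `t` into a tuple of `n - 1` blocks. -/
def insertAt {n ℓ : ℕ} (t : Fin n) (c : Fin ℓ → Bool) (β : Fin (n - 1) → Fin ℓ → Bool) :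
    Fin n → Fin ℓ → Bool :=
  fun j =>
    if h1 : (j : ℕ) = (t : ℕ) then c
    else if h2 : (j : ℕ) < (t : ℕ) then
      β ⟨(j : ℕ), by have := t.isLt; have := j.isLt; omega⟩
    else β ⟨(j : ℕ) - 1, by have := t.isLt; have := j.isLt; omega⟩

/-- The parity condition for a flat (Boolean-bit) signature. -/
def ParityCond1 {m : ℕ} (Γ : (Fin m → Bool) → ℂ) : Prop :=
  (∀ α, wt α % 2 = 0 → Γ α = 0) ∨ (∀ α, wt α % 2 = 1 → Γ α = 0)

/-- The Matchgate Identities for a flat (Boolean-bit) signature. -/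
def MGI1 {m : ℕ} (Γ : (Fin m → Bool) → ℂ) : Prop :=
  ∀ (α : Fin m → Bool) (P : Finset (Fin m)),
    ∑ p ∈ P,
      (-1 : ℂ) ^ (P.filter fun q => q ≤ p).card *
        Γ (fun k => Bool.xor (α k) (decide (k = p))) *
        Γ (fun k => Bool.xor (α k) (Bool.xor (decide (k ∈ P)) (decide (k = p)))) = 0

end Matchgate

open symmDiff

namespace Finset

lemma even_card_of_sum_eq_zero {α : Type*} {T : Finset α} {s : α → ℤ}
    (hs : ∀ p ∈ T, s p = 1 ∨ s p = -1) (h : ∑ p ∈ T, s p = 0) : Even #T := by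
  have hcast : ((∑ p ∈ T, s p : ℤ) : ZMod 2) = #T := by
    rw [Int.cast_sum, sum_congr rfl fun p hp => ?_, sum_const, nsmul_one]
    rcases hs p hp with h | h <;> rw [h] <;> decide
  rw [h, Int.cast_zero, eq_comm, ZMod.natCast_eq_zero_iff_even] at hcast
  exact hcast

section DecidableEq

variable {α : Type*} [DecidableEq α]

lemma sum_symmDiff_add_two_nsmul_sum_inter {M : Type*} [AddCommMonoid M] (A B : Finset α)
    (f : α → M) : ∑ p ∈ A ∆ B, f p + 2 • ∑ p ∈ A ∩ B, f p = ∑ p ∈ A, f p + ∑ p ∈ B, f p := by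
  rw [symmDiff_eq_sup_sdiff_inf, Finset.sup_eq_union, Finset.inf_eq_inter, two_nsmul, ← add_assoc,
    sum_sdiff inter_subset_union, sum_union_inter]

lemma card_symmDiff_add_two_mul_card_inter (A B : Finset α) :
    #(A ∆ B) + 2 * #(A ∩ B) = #A + #B := by
  have h := sum_symmDiff_add_two_nsmul_sum_inter A B fun _ => (1 : ℕ)
  simp only [sum_const, smul_eq_mul, mul_one] at h
  exact h

lemma neg_one_pow_card_symmDiff {R : Type*} [Monoid R] [HasDistribNeg R] (A B : Finset α) :
    (-1 : R) ^ #(A ∆ B) = (-1) ^ #A * (-1) ^ #B := by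
  rw [← pow_add, ← card_symmDiff_add_two_mul_card_inter, pow_add, pow_mul]
  simp

lemma symmDiff_subset_of_subset {D w z : Finset α} (hw : w ⊆ D) (hz : z ⊆ D) : w ∆ z ⊆ D :=
  symmDiff_subset_union.trans (union_subset hw hz)

lemma sum_powerset_symmDiff {M : Type*} [AddCommMonoid M] {D z : Finset α} (hz : z ⊆ D)
    (f : Finset α → M) : ∑ w ∈ D.powerset, f (w ∆ z) = ∑ w ∈ D.powerset, f w :=
  have hmem : ∀ w ∈ D.powerset, w ∆ z ∈ D.powerset := fun _ hw =>
    mem_powerset.mpr (symmDiff_subset_of_subset (mem_powerset.mp hw) hz)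
  sum_nbij' (· ∆ z) (· ∆ z) hmem hmem (fun w _ => symmDiff_symmDiff_cancel_right z w)
    (fun w _ => symmDiff_symmDiff_cancel_right z w) (fun _ _ => rfl)

lemma singleton_symmDiff_singleton {a b : α} (h : a ≠ b) :
    ({a} : Finset α) ∆ {b} = {a, b} := by
  ext c
  by_cases ha : c = a <;> by_cases hb : c = b <;> simp_all [mem_symmDiff]

lemma sum_neg_one_pow_card_filter_le {β : Type*} [LinearOrder β] {f : α → β}
    (hf : Function.Injective f) (E : Finset α) :
    ∑ p ∈ E, (-1 : ℤ) ^ #(E.filter fun q => f q ≤ f p) = if Even #E then 0 else -1 := by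
  induction E using Finset.induction_on_max_value f with
  | empty => simp
  | insert a s ha hmax ih =>
    have hlt : ∀ q ∈ s, f q < f a := fun q hq =>
      (hmax q hq).lt_of_ne fun h => ha (hf h ▸ hq)
    have htop : (insert a s).filter (fun q => f q ≤ f a) = insert a s :=
      filter_true_of_mem fun q hq => (mem_insert.mp hq).elim (fun h => h ▸ le_rfl)
        fun h => (hlt q h).le
    have hrest : ∀ p ∈ s, (insert a s).filter (fun q => f q ≤ f p) = s.filter fun q => f q ≤ f p :=
      fun p hp => by rw [filter_insert, if_neg (hlt p hp).not_ge]
    rw [sum_insert ha, htop, sum_congr rfl fun p hp => by rw [hrest p hp], ih,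
      card_insert_of_notMem ha, pow_succ]
    rcases Nat.even_or_odd #s with h | h
    · simp [h, h.neg_one_pow, Nat.even_add_one]
    · simp [Nat.not_even_iff_odd.mpr h, h.neg_one_pow, Nat.even_add_one]

section Walsh

variable {K : Type*}

section CommRing

variable [CommRing K]

def walsh (S z : Finset α) : K := (-1) ^ #(S ∩ z)

lemma walsh_comm (S z : Finset α) : (walsh S z : K) = walsh z S := by
  rw [walsh, walsh, inter_comm]

lemma walsh_symmDiff_right (S z w : Finset α) :
    (walsh S (z ∆ w) : K) = walsh S z * walsh S w := by
  rw [walsh, ← Finset.inf_eq_inter, inf_symmDiff_distrib_left, neg_one_pow_card_symmDiff]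
  rfl

lemma walsh_symmDiff_left (S T z : Finset α) :
    (walsh (S ∆ T) z : K) = walsh S z * walsh T z := by
  rw [walsh_comm, walsh_symmDiff_right, walsh_comm z, walsh_comm z]

lemma walsh_of_even {S z : Finset α} (h : Even #(S ∩ z)) : (walsh S z : K) = 1 :=
  h.neg_one_pow

lemma walsh_singleton (S : Finset α) (p : α) :
    (walsh S {p} : K) = if p ∈ S then -1 else 1 := by
  by_cases h : p ∈ S
  · simp [walsh, inter_singleton_of_mem h, h]
  · simp [walsh, inter_singleton_of_notMem h, h]

def walshTransform (D : Finset α) (g : Finset α → K) (S : Finset α) : K :=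
  ∑ z ∈ D.powerset, g z * walsh S z

lemma walshTransform_symmDiff_of_odd_eq_zero {D D0 : Finset α} {g : Finset α → K}
    (hodd : ∀ z ⊆ D, Odd #(z ∩ D0) → g z = 0) (S : Finset α) :
    walshTransform D g (S ∆ D0) = walshTransform D g S := by
  refine sum_congr rfl fun z hz => ?_
  rcases Nat.even_or_odd #(z ∩ D0) with heven | hodd'
  · rw [walsh_symmDiff_left, walsh_comm D0, walsh_of_even heven, mul_one]
  · rw [hodd z (mem_powerset.mp hz) hodd', zero_mul, zero_mul]

end CommRing

variable [Field K] [CharZero K]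

lemma sum_powerset_walsh_eq_zero {D z : Finset α} (hz : z ⊆ D) (hne : z.Nonempty) :
    ∑ S ∈ D.powerset, (walsh S z : K) = 0 := by
  obtain ⟨t, ht⟩ := hne
  have hflip : ∑ S ∈ D.powerset, (walsh (S ∆ {t}) z : K) = -∑ S ∈ D.powerset, walsh S z := by
    simp only [walsh_symmDiff_left, walsh_comm {t}, walsh_singleton, if_pos ht, mul_neg_one,
      sum_neg_distrib]
  rw [sum_powerset_symmDiff (singleton_subset_iff.mpr (hz ht)) fun S => (walsh S z : K)] at hflip
  exact CharZero.eq_neg_self_iff.mp hflip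

lemma eq_zero_of_walshTransform_eq_zero {D : Finset α} {g : Finset α → K}
    (h : ∀ S ⊆ D, walshTransform D g S = 0) : g ∅ = 0 := by
  have hsum : ∑ S ∈ D.powerset, walshTransform D g S = g ∅ * 2 ^ #D := by
    simp only [walshTransform]
    rw [sum_comm]
    simp_rw [← mul_sum]
    rw [sum_eq_single_of_mem ∅ (empty_mem_powerset D)]
    · simp [walsh]
    · intro z hz hne
      rw [sum_powerset_walsh_eq_zero (mem_powerset.mp hz) (nonempty_iff_ne_empty.mpr hne),
        mul_zero]
  rw [sum_eq_zero fun S hS => h S (mem_powerset.mp hS)] at hsum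
  simpa using hsum.symm

lemma walshTransform_eq_zero_of_relations {D S : Finset α} {g : Finset α → K} (s : α → ℤ)
    (hsD : ∑ p ∈ D, s p = 0) (hrel : ∀ w ⊆ D, ∑ p ∈ D, (s p : K) * g (w ∆ {p}) = 0)
    (hS : S ⊆ D) (hsS : ∑ p ∈ S, s p ≠ 0) : walshTransform D g S = 0 := by
  have hshift : ∀ p ∈ D, ∑ w ∈ D.powerset, g (w ∆ {p}) * walsh S w
      = walsh S {p} * walshTransform D g S := by
    intro p hp
    rw [← sum_powerset_symmDiff (singleton_subset_iff.mpr hp), walshTransform, mul_sum]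
    refine sum_congr rfl fun w _ => ?_
    rw [symmDiff_symmDiff_cancel_right, walsh_symmDiff_right]
    ring
  have hcoeff : ∑ p ∈ D, (s p : K) * walsh S {p} = -2 * ((∑ p ∈ S, s p : ℤ) : K) := by
    have h : ∀ p ∈ D, (s p : K) * walsh S {p} = s p - 2 * (if p ∈ S then (s p : K) else 0) := by
      intro p _
      rw [walsh_singleton]
      split_ifs <;> ring
    rw [sum_congr rfl h, sum_sub_distrib, ← mul_sum, sum_ite_mem, inter_eq_right.mpr hS,
      ← Int.cast_sum, hsD, Int.cast_sum]
    ring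
  have hprod : (∑ p ∈ D, (s p : K) * walsh S {p}) * walshTransform D g S = 0 := by
    calc (∑ p ∈ D, (s p : K) * walsh S {p}) * walshTransform D g S
        = ∑ p ∈ D, (s p : K) * ∑ w ∈ D.powerset, g (w ∆ {p}) * walsh S w := by
          rw [sum_mul]
          exact sum_congr rfl fun p hp => by rw [hshift p hp, mul_assoc]
      _ = ∑ w ∈ D.powerset, walsh S w * ∑ p ∈ D, (s p : K) * g (w ∆ {p}) := by
          simp_rw [mul_sum]
          rw [sum_comm]
          exact sum_congr rfl fun _ _ => sum_congr rfl fun _ _ => by ring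
      _ = 0 := sum_eq_zero fun w hw => by rw [hrel w (mem_powerset.mp hw), mul_zero]
  rw [hcoeff] at hprod
  exact (mul_eq_zero.mp hprod).resolve_left
    (mul_ne_zero (by norm_num) (Int.cast_ne_zero.mpr hsS))

lemma walshTransform_eq_zero_of_antisymm {D D0 S : Finset α} {g : Finset α → K}
    (hD0 : D0 ⊆ D) (hanti : ∀ z, g (z ∆ D0) = -g z) (hS : Even #(S ∩ D0)) :
    walshTransform D g S = 0 := by
  have h : walshTransform D g S = -walshTransform D g S := by
    conv_lhs => rw [walshTransform, ← sum_powerset_symmDiff hD0]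
    rw [walshTransform, ← sum_neg_distrib]
    refine sum_congr rfl fun z _ => ?_
    rw [hanti, walsh_symmDiff_right, walsh_of_even hS]
    ring
  exact CharZero.eq_neg_self_iff.mp h

/- The Walsh transform of `g = F - F (· ∆ D0)` vanishes: the relations kill the modes `S` with
`∑_S s ≠ 0`, the antisymmetry of `g` kills those with `|S ∩ D0|` even, and the support of `g`
makes the transform invariant under `S ↦ S ∆ D0`, which turns a balanced odd mode into an
unbalanced one. -/
lemma apply_eq_apply_empty_of_relations {D D0 : Finset α} (hD0 : D0 ⊆ D) (s : α → ℤ)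
    (hs : ∀ p ∈ D, s p = 1 ∨ s p = -1) (hsD : ∑ p ∈ D, s p = 0) (hsD0 : ∑ p ∈ D0, s p = 0)
    (F : Finset α → K) (hrel : ∀ w ⊆ D, ∑ p ∈ D, (s p : K) * F (w ∆ {p}) = 0)
    (hodd : ∀ z ⊆ D, Odd #(z ∩ D0) → F z = 0) :
    F D0 = F ∅ := by
  set g : Finset α → K := fun z => F z - F (z ∆ D0)
  have hD0even : Even #D0 := even_card_of_sum_eq_zero (fun p hp => hs p (hD0 hp)) hsD0
  have grel : ∀ w ⊆ D, ∑ p ∈ D, (s p : K) * g (w ∆ {p}) = 0 := by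
    intro w hw
    simp only [g, mul_sub, sum_sub_distrib, symmDiff_right_comm _ {_} D0]
    rw [hrel w hw, hrel _ (symmDiff_subset_of_subset hw hD0), sub_zero]
  have ganti : ∀ z, g (z ∆ D0) = -g z := fun z => by
    simp only [g, symmDiff_symmDiff_cancel_right]
    ring
  have godd : ∀ z ⊆ D, Odd #(z ∩ D0) → g z = 0 := by
    intro z hz hz0
    have hcomp : Odd #((z ∆ D0) ∩ D0) := by
      rw [← Finset.inf_eq_inter, inf_symmDiff_distrib_right, inf_idem,
        symmDiff_of_le inf_le_right, card_sdiff_of_subset inf_le_right]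
      exact Nat.Even.sub_odd (card_le_card inf_le_right) hD0even hz0
    simp only [g, hodd z hz hz0,
      hodd _ (symmDiff_subset_of_subset hz hD0) hcomp, sub_zero]
  have hparity : ∀ T ⊆ D, Odd #T → ∑ p ∈ T, s p ≠ 0 := fun T hT hodd h =>
    Nat.not_even_iff_odd.mpr hodd (even_card_of_sum_eq_zero (fun p hp => hs p (hT hp)) h)
  have hvanish : ∀ S ⊆ D, walshTransform D g S = 0 := by
    intro S hS
    rcases Nat.even_or_odd #(S ∩ D0) with heven | hSodd
    · exact walshTransform_eq_zero_of_antisymm hD0 ganti heven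
    by_cases hsS : ∑ p ∈ S, s p = 0
    · have hsum : ∑ p ∈ S ∆ D0, s p = -2 * ∑ p ∈ S ∩ D0, s p := by
        have := sum_symmDiff_add_two_nsmul_sum_inter S D0 s
        rw [hsS, hsD0, nsmul_eq_mul, Nat.cast_ofNat] at this
        linarith
      rw [← walshTransform_symmDiff_of_odd_eq_zero godd S]
      refine walshTransform_eq_zero_of_relations s hsD grel
        (symmDiff_subset_of_subset hS hD0) ?_
      rw [hsum]
      exact mul_ne_zero (by norm_num) (hparity _ (inter_subset_left.trans hS) hSodd)
    · exact walshTransform_eq_zero_of_relations s hsD grel hS hsS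
  have := eq_zero_of_walshTransform_eq_zero hvanish
  simp only [g] at this
  rwa [show (∅ : Finset α) ∆ D0 = D0 from bot_symmDiff D0, sub_eq_zero, eq_comm] at this

end Walsh

end DecidableEq

end Finset

lemma Matrix.rank_le_one_of_mul_eq_mul {m p K : Type*} [Fintype p] [Field K]
    (M : Matrix m p K) (h : ∀ i i' j j', M i j * M i' j' = M i j' * M i' j) : M.rank ≤ 1 := by
  by_cases hM : M = 0
  · simp [hM]
  obtain ⟨i₀, j₀, hij⟩ : ∃ i j, M i j ≠ 0 := by
    by_contra! h0
    exact hM (Matrix.ext h0)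
  have hM : M = Matrix.vecMulVec (fun i => M i j₀) (fun j => M i₀ j / M i₀ j₀) := by
    ext i j
    rw [Matrix.vecMulVec_apply, mul_div_assoc', eq_div_iff hij, h i i₀ j j₀]
  rw [hM]
  exact Matrix.rank_vecMulVec_le _ _

lemma Equiv.Perm.exists_apply_eq_apply_eq {α : Type*} [DecidableEq α] {a b c d : α}
    (hab : a ≠ b) (hcd : c ≠ d) : ∃ σ : Equiv.Perm α, σ a = c ∧ σ b = d := by
  set b' := Equiv.swap a c b
  have hb' : b' ≠ c := fun h =>
    hab ((Equiv.swap a c).injective ((Equiv.swap_apply_left a c).trans h.symm))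
  refine ⟨(Equiv.swap a c).trans (Equiv.swap b' d), ?_, by simp [b']⟩
  simp [Equiv.swap_apply_of_ne_of_ne hb'.symm hcd]

namespace Matchgate

variable {n ℓ : ℕ} {Γ : (Fin n → Fin ℓ → Bool) → ℂ}

def flipSet (x : Fin n → Fin ℓ → Bool) (z : Finset (Fin n × Fin ℓ)) : Fin n → Fin ℓ → Bool :=
  fun j i => Bool.xor (x j i) (decide ((j, i) ∈ z))

@[simp] lemma flipSet_empty (x : Fin n → Fin ℓ → Bool) : flipSet x ∅ = x := by
  funext j i
  simp [flipSet]

lemma flipSet_flipSet (x : Fin n → Fin ℓ → Bool) (w z : Finset (Fin n × Fin ℓ)) :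
    flipSet (flipSet x w) z = flipSet x (w ∆ z) := by
  funext j i
  simp only [flipSet, mem_symmDiff]
  by_cases hw : (j, i) ∈ w <;> by_cases hz : (j, i) ∈ z <;> simp [hw, hz]

lemma exists_flipSet_eq (x y : Fin n → Fin ℓ → Bool) : ∃ z, flipSet x z = y :=
  ⟨univ.filter fun q => x q.1 q.2 ≠ y q.1 q.2, by
    funext j i
    cases hx : x j i <;> cases hy : y j i <;> simp [flipSet, hx, hy]⟩

lemma flipSet_filter_fst (x : Fin n → Fin ℓ → Bool) (z : Finset (Fin n × Fin ℓ)) (k : Fin n) :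
    flipSet x (z.filter fun q => q.1 = k) = Function.update x k (flipSet x z k) := by
  funext j i
  by_cases hj : j = k
  · subst hj
    simp [flipSet]
  · simp [flipSet, hj]

lemma flipBlock_unit (x : Fin n → Fin ℓ → Bool) (j : Fin n) (s : Fin ℓ) :
    flipBlock x j (unit s) = flipSet x {(j, s)} := by
  funext j' i
  by_cases hj : j' = j
  · subst hj
    simp [flipBlock, flipSet, bxor, unit]
  · simp [flipBlock, flipSet, hj]

-- `toLex` orders positions as in the flattened string `α₁α₂⋯αₙ`, as in `MGI`.
def mgiSign (P : Finset (Fin n × Fin ℓ)) (p : Fin n × Fin ℓ) : ℤ :=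
  (-1) ^ #(P.filter fun q => toLex q ≤ toLex p)

lemma sum_mgiSign {P : Finset (Fin n × Fin ℓ)} (hP : Even #P) : ∑ p ∈ P, mgiSign P p = 0 := by
  simpa [mgiSign, hP] using sum_neg_one_pow_card_filter_le toLex.injective P

lemma MGI.sum_flipSet (hmgi : MGI Γ)
    (x : Fin n → Fin ℓ → Bool) (P : Finset (Fin n × Fin ℓ)) :
    ∑ p ∈ P, (mgiSign P p : ℂ) * Γ (flipSet x {p}) * Γ (flipSet x (P ∆ {p})) = 0 := by
  rw [← hmgi x P]
  refine sum_congr rfl fun p _ => ?_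
  have hsign : (mgiSign P p : ℂ)
      = (-1) ^ #(P.filter fun q => q.1 < p.1 ∨ (q.1 = p.1 ∧ q.2 ≤ p.2)) := by
    simp [mgiSign, Prod.Lex.toLex_le_toLex]
  have hflip : flipSet x {p} = fun j i => Bool.xor (x j i) (decide ((j, i) = p)) := by
    funext j i
    simp [flipSet]
  have hflip' : flipSet x (P ∆ {p}) = fun j i => Bool.xor (x j i)
      (Bool.xor (decide ((j, i) ∈ P)) (decide ((j, i) = p))) := by
    funext j i
    by_cases hP : (j, i) ∈ P <;> by_cases hp : (j, i) = p <;> simp [flipSet, mem_symmDiff, hP, hp]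
  rw [hsign, hflip, hflip']

def HasCrossBlockFlip (Γ : (Fin n → Fin ℓ → Bool) → ℂ) : Prop :=
  ∃ (u : Fin n → Fin ℓ → Bool) (p q : Fin n × Fin ℓ),
    p.1 ≠ q.1 ∧ Γ u ≠ 0 ∧ Γ (flipSet u {p, q}) ≠ 0

lemma exists_flip_pair_same_block (hmgi : MGI Γ) (hΓ : ¬ HasCrossBlockFlip Γ)
    {x : Fin n → Fin ℓ → Bool} {z : Finset (Fin n × Fin ℓ)} (hx : Γ x ≠ 0)
    (hz : Γ (flipSet x z) ≠ 0) {p : Fin n × Fin ℓ} (hp : p ∈ z) :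
    ∃ r ∈ z, r ≠ p ∧ r.1 = p.1 ∧ Γ (flipSet x {p, r}) ≠ 0 := by
  by_contra! hcon
  have hpair : ∀ r ∈ z, r ≠ p → Γ (flipSet x {p, r}) = 0 := by
    intro r hr hrp
    by_cases hblock : r.1 = p.1
    · exact hcon r hr hrp hblock
    · by_contra hne
      exact hΓ ⟨x, p, r, Ne.symm hblock, hx, hne⟩
  have hsum := hmgi.sum_flipSet (flipSet x {p}) z
  rw [sum_eq_single_of_mem p hp fun r hr hrp => by
    rw [flipSet_flipSet, singleton_symmDiff_singleton (Ne.symm hrp), hpair r hr hrp,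
      mul_zero, zero_mul]] at hsum
  rw [flipSet_flipSet, flipSet_flipSet, symmDiff_self, bot_eq_empty, flipSet_empty,
    symmDiff_comm z, symmDiff_symmDiff_cancel_left] at hsum
  have hsign : (mgiSign z p : ℂ) ≠ 0 := by
    rcases neg_one_pow_eq_or ℤ #(z.filter fun q => toLex q ≤ toLex p) with h | h <;>
      simp [mgiSign, h]
  exact mul_ne_zero (mul_ne_zero hsign hx) hz hsum

lemma even_card_filter_fst (hmgi : MGI Γ) (hΓ : ¬ HasCrossBlockFlip Γ)
    {x : Fin n → Fin ℓ → Bool} {z : Finset (Fin n × Fin ℓ)} (hx : Γ x ≠ 0)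
    (hz : Γ (flipSet x z) ≠ 0) (k : Fin n) : Even #(z.filter fun q => q.1 = k) := by
  induction hc : #z using Nat.strong_induction_on generalizing x z with
  | _ c ih =>
  obtain rfl | ⟨p, hp⟩ := z.eq_empty_or_nonempty
  · simp
  obtain ⟨r, hr, hrp, hrblock, hxr⟩ := exists_flip_pair_same_block hmgi hΓ hx hz hp
  have hpr : {p, r} ⊆ z := insert_subset hp (singleton_subset_iff.mpr hr)
  have hrest : flipSet (flipSet x {p, r}) (z \ {p, r}) = flipSet x z := by
    rw [flipSet_flipSet, symmDiff_sdiff_eq_sup, sup_eq_union, union_eq_right.mpr hpr]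
  have heven := ih _ (hc ▸ card_lt_card (sdiff_ssubset hpr ⟨p, mem_insert_self p {r}⟩))
    hxr (hrest ▸ hz) rfl
  have hpair : Even #(({p, r} : Finset (Fin n × Fin ℓ)).filter fun q => q.1 = k) := by
    by_cases hk : p.1 = k
    · rw [filter_true_of_mem (by simp [hk, hrblock]), card_pair (Ne.symm hrp)]
      exact even_two
    · rw [filter_false_of_mem (by simp [hk, hrblock])]
      simp
  rw [← sdiff_union_of_subset hpr, filter_union,
    card_union_of_disjoint (disjoint_filter_filter sdiff_disjoint)]
  exact heven.add hpair

lemma mgiSign_filter_fst {k : Fin n} (hk : (k : ℕ) = 0) (z : Finset (Fin n × Fin ℓ))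
    {p : Fin n × Fin ℓ} (hp : p.1 = k) : mgiSign (z.filter fun q => q.1 = k) p = mgiSign z p := by
  unfold mgiSign
  rw [filter_filter]
  refine congrArg _ (congrArg _ (filter_congr fun q _ => and_iff_right_of_imp fun hq => ?_))
  rw [Prod.Lex.toLex_le_toLex, hp] at hq
  rcases hq with h | ⟨h, _⟩
  · exact absurd h (by rw [Fin.lt_def, hk]; omega)
  · exact h

lemma even_card_of_not_hasCrossBlockFlip (hmgi : MGI Γ) (hΓ : ¬ HasCrossBlockFlip Γ)
    {x : Fin n → Fin ℓ → Bool} {z : Finset (Fin n × Fin ℓ)} (hx : Γ x ≠ 0)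
    (hz : Γ (flipSet x z) ≠ 0) : Even #z := by
  rw [card_eq_sum_card_fiberwise (f := Prod.fst) (t := univ) fun _ _ => mem_coe.mpr (mem_univ _)]
  exact even_sum _ fun k _ => even_card_filter_fst hmgi hΓ hx hz k

lemma mul_eq_mul_update_of_ne_zero (hmgi : MGI Γ) (hΓ : ¬ HasCrossBlockFlip Γ) {k : Fin n}
    (hk : (k : ℕ) = 0) {x y : Fin n → Fin ℓ → Bool} (hx : Γ x ≠ 0) (hy : Γ y ≠ 0) :
    Γ x * Γ y = Γ (Function.update x k (y k)) * Γ (Function.update y k (x k)) := by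
  obtain ⟨z, rfl⟩ := exists_flipSet_eq x y
  set D0 := z.filter fun q => q.1 = k
  have hsub : D0 ⊆ z := filter_subset _ z
  have hF := apply_eq_apply_empty_of_relations hsub (mgiSign z)
    (fun p _ => neg_one_pow_eq_or ℤ _)
    (sum_mgiSign (even_card_of_not_hasCrossBlockFlip hmgi hΓ hx hy))
    (by
      rw [← sum_congr rfl fun p hp => mgiSign_filter_fst hk z (mem_filter.mp hp).2]
      exact sum_mgiSign (even_card_filter_fst hmgi hΓ hx hy k))
    (fun w => Γ (flipSet x w) * Γ (flipSet (flipSet x z) w))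
    (fun w _ => by
      rw [← hmgi.sum_flipSet (flipSet x w) z]
      refine sum_congr rfl fun p _ => ?_
      simp only [flipSet_flipSet, symmDiff_left_comm z w]
      ring)
    (fun w hw hodd => by
      by_contra hne
      have heven := even_card_filter_fst hmgi hΓ hx (left_ne_zero_of_mul hne) k
      rw [inter_filter, inter_eq_left.mpr hw] at hodd
      exact Nat.not_even_iff_odd.mpr hodd heven)
  simp only [flipSet_empty, D0, flipSet_filter_fst, flipSet_flipSet, symmDiff_self,
    bot_eq_empty] at hF
  exact hF.symm

lemma mul_eq_mul_update (hmgi : MGI Γ) (hΓ : ¬ HasCrossBlockFlip Γ) {k : Fin n}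
    (hk : (k : ℕ) = 0) (x y : Fin n → Fin ℓ → Bool) :
    Γ x * Γ y = Γ (Function.update x k (y k)) * Γ (Function.update y k (x k)) := by
  by_cases hxy : Γ x ≠ 0 ∧ Γ y ≠ 0
  · exact mul_eq_mul_update_of_ne_zero hmgi hΓ hk hxy.1 hxy.2
  by_cases hxy' : Γ (Function.update x k (y k)) ≠ 0 ∧ Γ (Function.update y k (x k)) ≠ 0
  · have h := mul_eq_mul_update_of_ne_zero hmgi hΓ hk hxy'.1 hxy'.2
    simp only [Function.update_self, Function.update_idem, Function.update_eq_self] at h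
    exact h.symm
  rw [not_and_or, not_not, not_not] at hxy hxy'
  rw [mul_eq_zero.mpr hxy, mul_eq_zero.mpr hxy']

lemma update_cons0 {k : Fin n} (hk : (k : ℕ) = 0) (a c : Fin ℓ → Bool)
    (b : Fin (n - 1) → Fin ℓ → Bool) : Function.update (cons0 a b) k c = cons0 c b := by
  funext j
  by_cases hj : j = k
  · subst hj
    simp [cons0, hk]
  · have : (j : ℕ) ≠ 0 := fun h => hj (Fin.ext (h.trans hk.symm))
    simp [cons0, hj, this]

lemma cons0_apply_of_val_eq_zero {k : Fin n} (hk : (k : ℕ) = 0) (a : Fin ℓ → Bool)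
    (b : Fin (n - 1) → Fin ℓ → Bool) : cons0 a b k = a := by
  simp [cons0, hk]

lemma rank_matrixForm_le_one (hn : 0 < n) (hmgi : MGI Γ) (hΓ : ¬ HasCrossBlockFlip Γ) :
    (matrixForm Γ).rank ≤ 1 := by
  refine Matrix.rank_le_one_of_mul_eq_mul _ fun a a' b b' => ?_
  have hk : ((⟨0, hn⟩ : Fin n) : ℕ) = 0 := rfl
  have h := mul_eq_mul_update hmgi hΓ hk (cons0 a b) (cons0 a' b')
  simp only [cons0_apply_of_val_eq_zero hk, update_cons0 hk] at h
  simpa [matrixForm, mul_comm (Γ (cons0 a b'))] using h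

lemma wtB_eq_card (x : Fin n → Fin ℓ → Bool) :
    wtB x = #(univ.filter fun q : Fin n × Fin ℓ => x q.1 q.2 = true) := by
  simp only [wtB, wt, card_filter, Fintype.sum_prod_type]

lemma filter_flipSet (x : Fin n → Fin ℓ → Bool) (z : Finset (Fin n × Fin ℓ)) :
    univ.filter (fun q : Fin n × Fin ℓ => flipSet x z q.1 q.2 = true)
      = univ.filter (fun q : Fin n × Fin ℓ => x q.1 q.2 = true) ∆ z := by
  ext q
  by_cases hq : q ∈ z <;> simp [flipSet, mem_symmDiff, hq]

lemma ParityCond.even_card {x : Fin n → Fin ℓ → Bool} {z : Finset (Fin n × Fin ℓ)}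
    (hpar : ParityCond Γ) (hx : Γ x ≠ 0) (hz : Γ (flipSet x z) ≠ 0) : Even #z := by
  have hsame : wtB (flipSet x z) % 2 = wtB x % 2 := by
    rcases hpar with h | h
    · have h1 := mt (h x) hx; have h2 := mt (h (flipSet x z)) hz; omega
    · have h1 := mt (h x) hx; have h2 := mt (h (flipSet x z)) hz; omega
  have hcard := card_symmDiff_add_two_mul_card_inter
    (univ.filter fun q : Fin n × Fin ℓ => x q.1 q.2 = true) z
  rw [← filter_flipSet, ← wtB_eq_card, ← wtB_eq_card] at hcard
  rw [Nat.even_iff]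
  omega

lemma flipBlock_comp_perm (u : Fin n → Fin ℓ → Bool) (σ : Equiv.Perm (Fin n)) (j : Fin n)
    (c : Fin ℓ → Bool) : flipBlock (u ∘ σ) j c = flipBlock u (σ j) c ∘ σ := by
  simp [flipBlock, Function.update_comp_equiv]

lemma HasCrossBlockFlip.exists_flipBlock (hsym : BlockSym Γ) (h : HasCrossBlockFlip Γ)
    {j j' : Fin n} (hj : j ≠ j') :
    ∃ (α : Fin n → Fin ℓ → Bool) (s t : Fin ℓ),
      Γ α ≠ 0 ∧ Γ (flipBlock (flipBlock α j (unit s)) j' (unit t)) ≠ 0 := by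
  obtain ⟨u, p, q, hpq, hu, huv⟩ := h
  obtain ⟨σ, hσj, hσj'⟩ := Equiv.Perm.exists_apply_eq_apply_eq hj hpq
  refine ⟨u ∘ σ, p.2, q.2, by rwa [hsym], ?_⟩
  have hne : (p.1, p.2) ≠ (q.1, q.2) := fun h => hpq (congrArg Prod.fst h)
  rwa [flipBlock_comp_perm, flipBlock_comp_perm, hσj', hσj, hsym,
    flipBlock_unit, flipBlock_unit, flipSet_flipSet, singleton_symmDiff_singleton hne]

/-- if `rank M(Γ) ≥ 2` then `M(Γ)` has a nonsingular `2×2` submatrix whose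
rows differ by one bit flip in the first block and whose columns differ by one bit flip in
the second block, and (by parity) either both off-diagonal or both diagonal entries
vanish. -/
theorem stmt4 (n ℓ : ℕ) (hn : 2 ≤ n)
    (Γ : (Fin n → Fin ℓ → Bool) → ℂ)
    (hsym : BlockSym Γ) (hpar : ParityCond Γ) (hmgi : MGI Γ)
    (hrank : 2 ≤ (matrixForm Γ).rank) :
    ∃ (α : Fin n → Fin ℓ → Bool) (s t : Fin ℓ),
      Matrix.det
        !![Γ α, Γ (flipBlock α ⟨1, by omega⟩ (unit t));
           Γ (flipBlock α ⟨0, by omega⟩ (unit s)),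
           Γ (flipBlock (flipBlock α ⟨0, by omega⟩ (unit s)) ⟨1, by omega⟩ (unit t))] ≠ 0 ∧
      ((Γ (flipBlock α ⟨1, by omega⟩ (unit t)) = 0 ∧
          Γ (flipBlock α ⟨0, by omega⟩ (unit s)) = 0) ∨
       (Γ α = 0 ∧
          Γ (flipBlock (flipBlock α ⟨0, by omega⟩ (unit s)) ⟨1, by omega⟩ (unit t)) = 0)) := by
  have hcross : HasCrossBlockFlip Γ := by
    by_contra hΓ
    have := rank_matrixForm_le_one (by omega) hmgi hΓ
    omega
  obtain ⟨α, s, t, hα, hαst⟩ :=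
    hcross.exists_flipBlock hsym (j := ⟨0, by omega⟩) (j' := ⟨1, by omega⟩) (by simp)
  have hflip (j : Fin n) (r : Fin ℓ) : Γ (flipBlock α j (unit r)) = 0 := by
    by_contra h
    rw [flipBlock_unit] at h
    simpa using hpar.even_card hα h
  refine ⟨α, s, t, ?_, Or.inl ⟨hflip _ _, hflip _ _⟩⟩
  rw [Matrix.det_fin_two_of, hflip, hflip, mul_zero, sub_zero]
  exact mul_ne_zero hα hαst

end Matchgate
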